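/- Let α be an irrational real number with 0 < α < 1/2, let k ≥ 2, and let m be a positive integer with ‖mα‖ ≥ ‖q_{k−1}α‖ + (a_{k+1} + 1)·‖q_kα‖. Then every factor of slope α that is an abelian power of period m and exponent e satisfies e < q_k − 1. -/

import Mathlib

open scoped Classical

noncomputable section

namespace SturmianAbelian

/-- Complete quotients: `cq α t = α_t` for `t ≥ 1`; `cq α 0 = α` is a dummy value chosen so that
`cq α 1 = 1/(α - ⌊α⌋) = 1/α` when `0 < α < 1`. -/
noncomputable def cq (α : ℝ) : ℕ → ℝ
  | 0 => α
  | t + 1 => (cq α t - ⌊cq α t⌋)⁻¹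

/-- Partial quotients: `pq α t = a_t = ⌊α_t⌋` for `t ≥ 1`. -/
noncomputable def pq (α : ℝ) (t : ℕ) : ℕ := (⌊cq α t⌋).toNat

/-- Denominators of the convergents of `α`: `qd α k = q_k`, with
`q_0 = 1`, `q_1 = a_1`, `q_k = a_k q_{k-1} + q_{k-2}`. -/
noncomputable def qd (α : ℝ) : ℕ → ℕ
  | 0 => 1
  | 1 => pq α 1
  | (k + 2) => pq α (k + 2) * qd α (k + 1) + qd α k

/-- Distance from `x` to the nearest integer, `‖x‖`. -/
noncomputable def nint (x : ℝ) : ℝ := min (Int.fract x) (1 - Int.fract x)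

/-- The representative of `x` modulo 1 lying in `(0, 1]`. -/
noncomputable def fract' (x : ℝ) : ℝ := 1 - Int.fract (-x)

/-- The Sturmian word of slope `α` and intercept `ρ` in the lower convention:
`s n = 1` iff the fractional part of `ρ + nα` lies in `[1 - α, 1)`. -/
noncomputable def lowerWord (α ρ : ℝ) (n : ℕ) : Bool :=
  if 1 - α ≤ Int.fract (ρ + (n : ℝ) * α) then true else false

/-- The Sturmian word of slope `α` and intercept `ρ` in the upper convention:
`s n = 1` iff the representative of `ρ + nα` modulo 1 in `(0,1]` lies in `(1 - α, 1]`. -/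
noncomputable def upperWord (α ρ : ℝ) (n : ℕ) : Bool :=
  if 1 - α < fract' (ρ + (n : ℝ) * α) then true else false

/-- `s` is a Sturmian word of slope `α` (either convention, some intercept `ρ ∈ [0,1)`). -/
def IsSturmian (α : ℝ) (s : ℕ → Bool) : Prop :=
  ∃ ρ : ℝ, 0 ≤ ρ ∧ ρ < 1 ∧ (s = lowerWord α ρ ∨ s = upperWord α ρ)

/-- `w` is a (finite, contiguous) factor of the infinite word `s`. -/
def FactorOf (s : ℕ → Bool) (w : List Bool) : Prop :=
  ∃ i : ℕ, w = (List.range w.length).map fun j => s (i + j)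

/-- `w` is a factor of slope `α`. -/
def IsFactor (α : ℝ) (w : List Bool) : Prop :=
  ∃ s : ℕ → Bool, IsSturmian α s ∧ FactorOf s w

/-- Abelian equivalence: same length and the same number of occurrences of the letter 1. -/
def AbEq (u v : List Bool) : Prop :=
  u.length = v.length ∧ u.count true = v.count true

/-- `u` is an abelian power of period `m` and exponent `e`: a concatenation of `e ≥ 2` pairwise
abelian equivalent blocks, each of length `m ≥ 1`. -/
def IsAbelianPower (m e : ℕ) (u : List Bool) : Prop :=
  1 ≤ m ∧ 2 ≤ e ∧ u.length = e * m ∧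
  ∀ i < e, ∀ j < e, AbEq ((u.drop (i * m)).take m) ((u.drop (j * m)).take m)

/-- `w` has abelian period `m`: `w` is a contiguous factor of some abelian power of period `m`. -/
def HasAbPeriod (w : List Bool) (m : ℕ) : Prop :=
  ∃ e u, IsAbelianPower m e u ∧ w <:+: u

/-- `m` is the minimum abelian period of `w`. -/
def MinAbPeriod (w : List Bool) (m : ℕ) : Prop :=
  IsLeast {p : ℕ | HasAbPeriod w p} m

/-- `M(α) = {t·q_k : k ≥ 0, 1 ≤ t ≤ a_{k+1}}`. -/
def Mset (α : ℝ) : Set ℕ :=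
  {m | ∃ k t : ℕ, 1 ≤ t ∧ t ≤ pq α (k + 1) ∧ m = t * qd α k}

/-- The set of denominators of convergents and semiconvergents of `α`. -/
def Qsc (α : ℝ) : Set ℕ :=
  {m | (∃ k : ℕ, m = qd α k) ∨
    ∃ k l : ℕ, 1 ≤ k ∧ 1 ≤ l ∧ l < pq α (k + 1) ∧ m = l * qd α k + qd α (k - 1)}

/-- The singular factor of length `q_k`: the unique factor of slope `α` of length `q_k` that is not
abelian equivalent to any other factor of slope `α` of the same length. -/
def IsSingular (α : ℝ) (k : ℕ) (s : List Bool) : Prop :=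
  IsFactor α s ∧ s.length = qd α k ∧
  ∀ u : List Bool, IsFactor α u → u.length = qd α k → u ≠ s → ¬ AbEq u s

/-- `v` occurs in `u` at position `i`. -/
def OccursAt (v u : List Bool) (i : ℕ) : Prop :=
  i + v.length ≤ u.length ∧ (u.drop i).take v.length = v

/-- `u` is a complete first return to `v`: `v` is a prefix and a suffix of `u` and `v` has exactly
two occurrences in `u`. -/
def CompleteFirstReturn (v u : List Bool) : Prop :=
  v <+: u ∧ v <:+ u ∧ {i | OccursAt v u i}.ncard = 2

/-- `u` is a complete first return to `v` in the same phase. -/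
def CFRSamePhase (v u : List Bool) : Prop :=
  v <+: u ∧ v <:+ u ∧ u.length % v.length = 0 ∧
  2 ≤ {i | OccursAt v u i}.ncard ∧
  ∀ i : ℕ, OccursAt v u i → i % v.length = 0 → i = 0 ∨ i = u.length - v.length


/-!
Up to a shift, the number of letters `1` among the first `n` letters of a Sturmian word of
slope `α` is an integer `g n` with `n α - g n` oscillating by less than `1`. If a factor is an
abelian power of period `m` and exponent `e` whose blocks each contain `c` ones, then `g` rises by
`e c` over `e m` steps, so `e ‖m α‖ ≤ e |m α - c| < 1`. On the other hand the identities
`q_k ‖q_{k-1} α‖ + q_{k-1} ‖q_k α‖ = 1` and `‖q_{k-1} α‖ = a_{k+1} ‖q_k α‖ + ‖q_{k+1} α‖`, together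
with `q_k ≥ 3`, turn the hypothesis on `‖m α‖` into `(q_k - 1) ‖m α‖ ≥ 1`.
-/

lemma nint_le_abs_sub (x : ℝ) (n : ℤ) : nint x ≤ |x - n| := by
  rcases le_or_gt (n : ℝ) x with hnx | hxn
  · have : (n : ℝ) ≤ ⌊x⌋ := by exact_mod_cast Int.le_floor.2 hnx
    calc nint x ≤ Int.fract x := min_le_left _ _
      _ ≤ |x - n| := by rw [abs_of_nonneg (by linarith), Int.fract]; linarith
  · have : (⌊x⌋ : ℝ) + 1 ≤ n := by exact_mod_cast Int.floor_lt.2 hxn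
    calc nint x ≤ 1 - Int.fract x := min_le_right _ _
      _ ≤ |x - n| := by rw [abs_of_neg (by linarith), Int.fract]; linarith

lemma exists_nint_eq_abs_sub (x : ℝ) : ∃ n : ℤ, nint x = |x - n| := by
  have hx := Int.fract_lt_one x
  rcases min_choice (Int.fract x) (1 - Int.fract x) with h | h
  · exact ⟨⌊x⌋, by rw [nint, h, Int.fract, abs_of_nonneg (sub_nonneg.2 (Int.floor_le x))]⟩
  · refine ⟨⌊x⌋ + 1, ?_⟩
    rw [nint, h, abs_of_neg (by push_cast; linarith [Int.floor_add_fract x]), Int.fract]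
    push_cast
    ring

lemma nint_eq_abs_sub {x : ℝ} {p : ℤ} (hp : |x - p| ≤ 1 / 2) : nint x = |x - p| := by
  refine le_antisymm (nint_le_abs_sub x p) ?_
  obtain ⟨n, hn⟩ := exists_nint_eq_abs_sub x
  rcases eq_or_ne n p with rfl | hne
  · exact hn.ge
  · have hnp : (1 : ℝ) ≤ |(n : ℝ) - p| := by
      exact_mod_cast Int.one_le_abs (sub_ne_zero.2 hne)
    have := abs_sub_le (n : ℝ) x p
    rw [abs_sub_comm (n : ℝ) x, ← hn] at this
    linarith

lemma floor_add_sub_floor (x : ℝ) {a : ℝ} (h0 : 0 ≤ a) (h1 : a ≤ 1) :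
    ⌊x + a⌋ - ⌊x⌋ = if 1 - a ≤ Int.fract x then 1 else 0 := by
  have hx : x + a = (⌊x⌋ : ℝ) + (Int.fract x + a) := by rw [Int.fract]; ring
  rw [hx, Int.floor_intCast_add, add_sub_cancel_left, Int.floor_eq_iff]
  have := Int.fract_nonneg x
  have := Int.fract_lt_one x
  split_ifs with h <;> push_cast <;> constructor <;> linarith

lemma ceil_add_sub_ceil (x : ℝ) {a : ℝ} (h0 : 0 ≤ a) (h1 : a ≤ 1) :
    ⌈x + a⌉ - ⌈x⌉ = if ⌈x⌉ < x + a then 1 else 0 := by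
  have hx : x + a = (⌈x⌉ : ℝ) + (x - ⌈x⌉ + a) := by ring
  rw [hx, Int.ceil_intCast_add, add_sub_cancel_left, Int.ceil_eq_iff]
  have := Int.le_ceil x
  have := Int.ceil_lt_add_one x
  split_ifs with h <;> push_cast <;> constructor <;> linarith

lemma lowerWord_toNat {α : ℝ} (h0 : 0 ≤ α) (h1 : α ≤ 1) (ρ : ℝ) (n : ℕ) :
    ((lowerWord α ρ n).toNat : ℤ) = ⌊ρ + ((n + 1 : ℕ) : ℝ) * α⌋ - ⌊ρ + (n : ℝ) * α⌋ := by
  rw [show ρ + ((n + 1 : ℕ) : ℝ) * α = ρ + n * α + α by push_cast; ring,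
    floor_add_sub_floor _ h0 h1, lowerWord]
  split_ifs <;> rfl

lemma upperWord_toNat {α : ℝ} (h0 : 0 ≤ α) (h1 : α ≤ 1) (ρ : ℝ) (n : ℕ) :
    ((upperWord α ρ n).toNat : ℤ) = ⌈ρ + ((n + 1 : ℕ) : ℝ) * α⌉ - ⌈ρ + (n : ℝ) * α⌉ := by
  have hfract' : fract' (ρ + n * α) = 1 + (ρ + n * α) - ⌈ρ + n * α⌉ := by
    rw [fract', Int.fract, Int.floor_neg]
    push_cast
    ring
  rw [show ρ + ((n + 1 : ℕ) : ℝ) * α = ρ + n * α + α by push_cast; ring,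
    ceil_add_sub_ceil _ h0 h1, upperWord, hfract']
  split_ifs with h h' h' <;> first | rfl | (exfalso; linarith)

lemma IsSturmian.exists_height {α : ℝ} {s : ℕ → Bool} (hs : IsSturmian α s)
    (h0 : 0 ≤ α) (h1 : α ≤ 1) :
    ∃ g : ℕ → ℤ, (∀ n, ((s n).toNat : ℤ) = g (n + 1) - g n) ∧
      ∀ n n' : ℕ, |(n * α - g n) - (n' * α - g n')| < 1 := by
  obtain ⟨ρ, -, -, rfl | rfl⟩ := hs
  · refine ⟨fun n => ⌊ρ + n * α⌋, lowerWord_toNat h0 h1 ρ, fun n n' => ?_⟩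
    have := Int.floor_le (ρ + n * α)
    have := Int.lt_floor_add_one (ρ + n * α)
    have := Int.floor_le (ρ + n' * α)
    have := Int.lt_floor_add_one (ρ + n' * α)
    rw [abs_sub_lt_iff]
    constructor <;> linarith
  · refine ⟨fun n => ⌈ρ + n * α⌉, upperWord_toNat h0 h1 ρ, fun n n' => ?_⟩
    have := Int.le_ceil (ρ + n * α)
    have := Int.ceil_lt_add_one (ρ + n * α)
    have := Int.le_ceil (ρ + n' * α)
    have := Int.ceil_lt_add_one (ρ + n' * α)
    rw [abs_sub_lt_iff]
    constructor <;> linarith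

lemma count_true_map_range {s : ℕ → Bool} {g : ℕ → ℤ}
    (hg : ∀ n, ((s n).toNat : ℤ) = g (n + 1) - g n) (a m : ℕ) :
    ((((List.range m).map fun r => s (a + r)).count true : ℕ) : ℤ) = g (a + m) - g a := by
  induction m with
  | zero => simp
  | succ m ih =>
    rw [List.range_succ, List.map_append, List.count_append, Nat.cast_add, ih,
      ← add_assoc a m 1, ← sub_add_sub_cancel (g (a + m + 1)) (g (a + m)), ← hg,
      List.map_singleton, add_comm (g (a + m) - g a)]
    cases s (a + m) <;> rfl

lemma take_drop_map_range (f : ℕ → Bool) {L a b : ℕ} (h : a + b ≤ L) :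
    (((List.range L).map f).drop a).take b = (List.range b).map fun r => f (a + r) := by
  apply List.ext_getElem
  · simp only [List.length_take, List.length_drop, List.length_map, List.length_range]
    omega
  · intro n _ _
    simp only [List.getElem_take, List.getElem_drop, List.getElem_map, List.getElem_range]

lemma IsFactor.mul_nint_lt_one {α : ℝ} (h0 : 0 ≤ α) (h1 : α ≤ 1) {m e : ℕ} {u : List Bool}
    (hu : IsFactor α u) (hpow : IsAbelianPower m e u) : (e : ℝ) * nint (m * α) < 1 := by
  obtain ⟨s, hs, i, hu⟩ := hu
  obtain ⟨g, hg, hclose⟩ := hs.exists_height h0 h1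
  obtain ⟨-, -, hlen, hab⟩ := hpow
  rw [hlen] at hu
  have hcount : ∀ j < e, (((u.drop (j * m)).take m).count true : ℤ)
      = g (i + (j + 1) * m) - g (i + j * m) := by
    intro j hj
    rw [hu, take_drop_map_range _ (by nlinarith), add_mul, one_mul, ← add_assoc]
    simp_rw [← add_assoc]
    exact count_true_map_range hg _ m
  set c : ℤ := ((u.take m).count true : ℤ)
  have hblock : ∀ j < e, g (i + (j + 1) * m) - g (i + j * m) = c := by
    intro j hj
    have hsame := (hab j hj 0 (by omega)).2
    rw [zero_mul, List.drop_zero] at hsame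
    rw [← hcount j hj, hsame]
  have hrise : ∀ j ≤ e, g (i + j * m) - g i = j * c := by
    intro j
    induction j with
    | zero => simp
    | succ j ih =>
      intro hj
      have := hblock j (by omega)
      push_cast
      linarith [ih (by omega)]
  have hdiff : (((i + e * m : ℕ) : ℝ) * α - g (i + e * m)) - ((i : ℝ) * α - g i)
      = e * (m * α - c) := by
    have : ((g (i + e * m) : ℤ) : ℝ) - g i = e * c := by exact_mod_cast hrise e le_rfl
    push_cast
    linear_combination -this
  calc (e : ℝ) * nint (m * α) ≤ e * |m * α - c| := by
        gcongr
        exact nint_le_abs_sub _ c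
    _ = |(((i + e * m : ℕ) : ℝ) * α - g (i + e * m)) - ((i : ℝ) * α - g i)| := by
        rw [hdiff, abs_mul, Nat.abs_cast]
    _ < 1 := hclose _ _

section ContinuedFraction

variable {α : ℝ}

lemma cq_succ (α : ℝ) (t : ℕ) : cq α (t + 1) = (Int.fract (cq α t))⁻¹ := rfl

lemma irrational_cq (h : Irrational α) (t : ℕ) : Irrational (cq α t) := by
  induction t with
  | zero => exact h
  | succ t ih => exact (ih.sub_intCast _).inv

lemma fract_cq_pos (h : Irrational α) (t : ℕ) : 0 < Int.fract (cq α t) :=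
  Int.fract_pos.2 ((irrational_cq h t).ne_int _)

lemma one_lt_cq_succ (h : Irrational α) (t : ℕ) : 1 < cq α (t + 1) :=
  one_lt_inv₀ (fract_cq_pos h t) |>.2 (Int.fract_lt_one _)

lemma pq_succ_eq_floor (h : Irrational α) (t : ℕ) : (pq α (t + 1) : ℤ) = ⌊cq α (t + 1)⌋ :=
  Int.toNat_of_nonneg (Int.floor_nonneg.2 (zero_le_one.trans (one_lt_cq_succ h t).le))

lemma one_le_pq_succ (h : Irrational α) (t : ℕ) : 1 ≤ pq α (t + 1) := by
  have : (1 : ℤ) ≤ pq α (t + 1) := by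
    rw [pq_succ_eq_floor h, Int.le_floor]
    exact_mod_cast (one_lt_cq_succ h t).le
  exact_mod_cast this

lemma two_le_pq_one (h0 : 0 < α) (h2 : α < 1 / 2) : 2 ≤ pq α 1 := by
  have hcq : cq α 1 = α⁻¹ := by
    rw [cq_succ, cq, Int.fract_eq_self.2 ⟨h0.le, by linarith⟩]
  have : (2 : ℤ) ≤ ⌊cq α 1⌋ := by
    rw [Int.le_floor, hcq, le_inv_comm₀ (by norm_num) h0]
    push_cast
    linarith
  rw [pq]
  omega

/-- `approxErr α (t + 1) = |q_t α - p_t|` (see `qd_mul_sub_pn`). -/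
def approxErr (α : ℝ) : ℕ → ℝ
  | 0 => 1
  | t + 1 => Int.fract (cq α t) * approxErr α t

lemma approxErr_pos (h : Irrational α) (t : ℕ) : 0 < approxErr α t := by
  induction t with
  | zero => exact one_pos
  | succ t ih => exact mul_pos (fract_cq_pos h t) ih

lemma approxErr_succ_lt (h : Irrational α) (t : ℕ) : approxErr α (t + 1) < approxErr α t :=
  mul_lt_of_lt_one_left (approxErr_pos h t) (Int.fract_lt_one _)

lemma approxErr_one (h0 : 0 < α) (h1 : α < 1) : approxErr α 1 = α := by
  rw [approxErr, approxErr, cq, Int.fract_eq_self.2 ⟨h0.le, h1⟩, mul_one]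

lemma approxErr_add_two (h : Irrational α) (t : ℕ) :
    approxErr α (t + 2) = approxErr α t - pq α (t + 1) * approxErr α (t + 1) := by
  have hinv : cq α (t + 1) * approxErr α (t + 1) = approxErr α t := by
    rw [cq_succ, approxErr, inv_mul_cancel_left₀ (fract_cq_pos h t).ne']
  have hpq : (pq α (t + 1) : ℝ) = ⌊cq α (t + 1)⌋ := by exact_mod_cast pq_succ_eq_floor h t
  rw [approxErr, Int.fract, hpq, sub_mul, hinv]

/-- `pn α k = p_k`, the numerators of the convergents. -/
def pn (α : ℝ) : ℕ → ℤ
  | 0 => 0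
  | 1 => 1
  | k + 2 => pq α (k + 2) * pn α (k + 1) + pn α k

lemma qd_add_two (α : ℝ) (k : ℕ) :
    (qd α (k + 2) : ℝ) = pq α (k + 2) * qd α (k + 1) + qd α k := by
  simp only [qd]
  push_cast
  ring

lemma qd_mul_sub_pn (h : Irrational α) (h0 : 0 < α) (h1 : α < 1) (k : ℕ) :
    (qd α k : ℝ) * α - pn α k = (-1) ^ k * approxErr α (k + 1) := by
  induction k using Nat.twoStepInduction with
  | zero => simp [qd, pn, approxErr_one h0 h1]
  | one =>
    rw [approxErr_add_two h, approxErr_one h0 h1]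
    simp [qd, pn, approxErr]
  | more k ih₀ ih₁ =>
    have hp : (pn α (k + 2) : ℝ) = pq α (k + 2) * pn α (k + 1) + pn α k := by
      simp only [pn]
      push_cast
      ring
    rw [qd_add_two, hp, approxErr_add_two h (k + 1)]
    linear_combination (pq α (k + 2) : ℝ) * ih₁ + ih₀

lemma qd_succ_mul_approxErr_add (h : Irrational α) (h0 : 0 < α) (h1 : α < 1) (k : ℕ) :
    (qd α (k + 1) : ℝ) * approxErr α (k + 1) + qd α k * approxErr α (k + 2) = 1 := by
  induction k with
  | zero =>
    rw [approxErr_add_two h, approxErr_one h0 h1]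
    simp [qd, approxErr]
  | succ k ih =>
    rw [qd_add_two, approxErr_add_two h (k + 1)]
    linear_combination ih

lemma approxErr_add_two_lt_half (h : Irrational α) (h0 : 0 < α) (h1 : α < 1) (k : ℕ) :
    approxErr α (k + 2) < 1 / 2 := by
  have htwo : approxErr α 2 < 1 / 2 := by
    have hrec := approxErr_add_two h 0
    have hlt := approxErr_succ_lt h 1
    have ha : (1 : ℝ) ≤ pq α 1 := by exact_mod_cast one_le_pq_succ h 0
    have hpos := approxErr_pos h 1
    simp only [approxErr, zero_add] at hrec hlt ⊢
    nlinarith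
  induction k with
  | zero => exact htwo
  | succ k ih => exact (approxErr_succ_lt h (k + 2)).trans ih

lemma nint_qd_succ_mul (h : Irrational α) (h0 : 0 < α) (h1 : α < 1) (k : ℕ) :
    nint (qd α (k + 1) * α) = approxErr α (k + 2) := by
  have habs : |(qd α (k + 1) : ℝ) * α - pn α (k + 1)| = approxErr α (k + 2) := by
    rw [qd_mul_sub_pn h h0 h1, abs_mul, abs_pow, abs_neg, abs_one, one_pow, one_mul,
      abs_of_pos (approxErr_pos h _)]
  rw [nint_eq_abs_sub (habs ▸ (approxErr_add_two_lt_half h h0 h1 k).le), habs]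

lemma one_le_qd (h : Irrational α) (k : ℕ) : 1 ≤ qd α k := by
  induction k using Nat.twoStepInduction with
  | zero => exact le_rfl
  | one => exact one_le_pq_succ h 0
  | more k _ ih₁ => simp only [qd]; nlinarith [one_le_pq_succ h (k + 1)]

lemma qd_succ_lt (h : Irrational α) (k : ℕ) : qd α (k + 1) < qd α (k + 2) := by
  simp only [qd]
  nlinarith [one_le_pq_succ h (k + 1), one_le_qd h k]

lemma three_le_qd (h : Irrational α) (h0 : 0 < α) (h2 : α < 1 / 2) (k : ℕ) :
    3 ≤ qd α (k + 2) := by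
  induction k with
  | zero =>
    simp only [qd]
    nlinarith [one_le_pq_succ h 1, two_le_pq_one h0 h2]
  | succ k ih => exact ih.trans (qd_succ_lt h (k + 1)).le

/-- Expanding `1 = q_k ‖q_{k-1}α‖ + q_{k-1} ‖q_k α‖` and `‖q_{k-1}α‖ = a_{k+1} ‖q_k α‖ + ‖q_{k+1}α‖`,
the difference of the two sides is `C ‖q_k α‖ - ‖q_{k+1} α‖` with `C ≥ 1`. -/
lemma one_le_qd_sub_one_mul (h : Irrational α) (h0 : 0 < α) (h2 : α < 1 / 2) (k : ℕ) :
    1 ≤ ((qd α (k + 2) : ℝ) - 1) *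
      (approxErr α (k + 2) + (pq α (k + 3) + 1) * approxErr α (k + 3)) := by
  have h1 : α < 1 := by linarith
  have hone := qd_succ_mul_approxErr_add h h0 h1 (k + 1)
  have hrec := approxErr_add_two h (k + 2)
  have hlt := approxErr_succ_lt h (k + 3)
  have hpos := approxErr_pos h (k + 3)
  have h3 : (3 : ℝ) ≤ qd α (k + 2) := by exact_mod_cast three_le_qd h h0 h2 k
  have hq : (qd α (k + 1) : ℝ) + 1 ≤ qd α (k + 2) := by exact_mod_cast qd_succ_lt h k
  have ha : (1 : ℝ) ≤ pq α (k + 3) := by exact_mod_cast one_le_pq_succ h (k + 2)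
  have hC : (1 : ℝ) ≤ ((qd α (k + 2) : ℝ) - 1) * (pq α (k + 3) + 1)
      - qd α (k + 1) - pq α (k + 3) := by nlinarith
  nlinarith [mul_le_mul_of_nonneg_right hC hpos.le]

end ContinuedFraction

theorem relation_exponent_convergent_improved_general
    (α : ℝ) (hirr : Irrational α) (h0 : 0 < α) (h2 : α < 1 / 2)
    (k : ℕ) (hk : 2 ≤ k) (m : ℕ)
    (h : nint ((qd α (k - 1) : ℝ) * α) + ((pq α (k + 1) : ℝ) + 1) * nint ((qd α k : ℝ) * α)
        ≤ nint ((m : ℝ) * α)) :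
    ∀ e : ℕ, ∀ u : List Bool, IsFactor α u → IsAbelianPower m e u →
      (e : ℤ) < (qd α k : ℤ) - 1 := by
  intro e u hu hpow
  obtain ⟨j, rfl⟩ : ∃ j, k = j + 2 := ⟨k - 2, by omega⟩
  have h1 : α < 1 := by linarith
  rw [show j + 2 - 1 = j + 1 by omega, nint_qd_succ_mul hirr h0 h1,
    nint_qd_succ_mul hirr h0 h1] at h
  have hpower := hu.mul_nint_lt_one h0.le h1.le hpow
  have h3 : (3 : ℝ) ≤ qd α (j + 2) := by exact_mod_cast three_le_qd hirr h0 h2 j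
  have hbound := (one_le_qd_sub_one_mul hirr h0 h2 j).trans
    (mul_le_mul_of_nonneg_left h (by linarith))
  have hnint : 0 < nint (m * α) := by
    nlinarith [approxErr_pos hirr (j + 2), approxErr_pos hirr (j + 3)]
  exact_mod_cast (mul_lt_mul_iff_left₀ hnint).1 (hpower.trans_le hbound)

theorem relation_exponent_convergent_improved
    (α : ℝ) (hirr : Irrational α) (h0 : 0 < α) (h2 : α < 1 / 2)
    (k : ℕ) (hk : 2 ≤ k) (m : ℕ) (hm : 0 < m)
    (h : nint ((qd α (k - 1) : ℝ) * α) + ((pq α (k + 1) : ℝ) + 1) * nint ((qd α k : ℝ) * α)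
        ≤ nint ((m : ℝ) * α)) :
    ∀ e : ℕ, ∀ u : List Bool, IsFactor α u → IsAbelianPower m e u →
      (e : ℤ) < (qd α k : ℤ) - 1 :=
  relation_exponent_convergent_improved_general α hirr h0 h2 k hk m h

end SturmianAbelian
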